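/- Let R be a ring in which 2 is invertible. An element a ∈ R has a Hirano inverse if and only if a = b - c for some commuting elements b, c ∈ R that both have strongly Drazin inverses. -/

import Mathlib

/-!
A strongly Drazin inverse of `a` exists iff `a - a ^ 2` is nilpotent, and a Hirano inverse iff
`a - a ^ 3` is nilpotent. All elements involved commute, so the arguments take place in a
commutative subring, where modulo the nilradical these conditions say that `a` is idempotent,
resp. tripotent. A tripotent `a` is the difference of the commuting idempotents `(a ^ 2 + a) / 2`
and `(a ^ 2 - a) / 2`, and a difference of commuting idempotents is tripotent. The inverses
themselves come from lifting the idempotent modulo nilpotents by Newton's method.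
-/

def IsHiranoInverse {R : Type*} [Ring R] (a b : R) : Prop :=
  IsNilpotent (a ^ 2 - a * b) ∧ a * b = b * a ∧ b = b * a * b

def IsStronglyDrazinInverse {R : Type*} [Ring R] (a x : R) : Prop :=
  IsNilpotent (a - a * x) ∧ a * x = x * a ∧ x = x * a * x

open Polynomial
open scoped IsMulCommutative

universe u

theorem Commute.exists_commRing_hom {R : Type u} [Ring R] {a b : R} (h : Commute a b) :
    ∃ (S : Type u) (_ : CommRing S) (f : S →+* R), Function.Injective f ∧
      ∃ a' b', f a' = a ∧ f b' = b := by
  have hcomm : ∀ x ∈ ({a, b} : Set R), ∀ y ∈ ({a, b} : Set R), x * y = y * x := by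
    rintro x (rfl | rfl) y (rfl | rfl)
    exacts [rfl, h.eq, h.symm.eq, rfl]
  have := Subring.isMulCommutative_closure hcomm
  exact ⟨Subring.closure {a, b}, inferInstance, (Subring.closure _).subtype, Subtype.val_injective,
    ⟨a, Subring.subset_closure (by simp)⟩, ⟨b, Subring.subset_closure (by simp)⟩, rfl, rfl⟩

section map

variable {R S F : Type*} [Ring R] [Ring S] [FunLike F R S] [RingHomClass F R S] {f : F} {a x : R}

theorem isStronglyDrazinInverse_map_iff (hf : Function.Injective f) :
    IsStronglyDrazinInverse (f a) (f x) ↔ IsStronglyDrazinInverse a x := by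
  simp only [IsStronglyDrazinInverse, ← map_mul, ← map_sub, IsNilpotent.map_iff hf, hf.eq_iff]

theorem isHiranoInverse_map_iff (hf : Function.Injective f) :
    IsHiranoInverse (f a) (f x) ↔ IsHiranoInverse a x := by
  simp only [IsHiranoInverse, ← map_pow, ← map_mul, ← map_sub, IsNilpotent.map_iff hf, hf.eq_iff]

end map

section CommRing

variable {S : Type*} [CommRing S]

theorem isNilpotent_iff_mk_nilradical_eq_zero {x : S} :
    IsNilpotent x ↔ Ideal.Quotient.mk (nilradical S) x = 0 := by
  rw [Ideal.Quotient.eq_zero_iff_mem, mem_nilradical]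

theorem exists_isIdempotentElem_isNilpotent_sub {s : S} (h : IsNilpotent (s - s ^ 2)) :
    ∃ e, IsIdempotentElem e ∧ IsNilpotent (s - e) := by
  have hP : IsNilpotent (aeval s (X ^ 2 - X : ℤ[X])) := by
    rw [map_sub, map_pow, aeval_X, ← neg_sub]
    exact h.neg
  have hP' : IsUnit (aeval s (derivative (X ^ 2 - X : ℤ[X]))) := by
    have : IsUnit ((2 * s - 1) ^ 2) := by
      rw [show (2 * s - 1) ^ 2 = 1 + -4 * (s - s ^ 2) by ring]
      exact ((Commute.all _ _).isNilpotent_mul_left h).isUnit_one_add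
    simpa [map_ofNat] using this
  obtain ⟨e, ⟨hse, he⟩, -⟩ := existsUnique_nilpotent_sub_and_aeval_eq_zero hP hP'
  refine ⟨e, ?_, hse⟩
  rw [map_sub, map_pow, aeval_X, sub_eq_zero] at he
  rw [IsIdempotentElem, ← sq, he]

theorem exists_isStronglyDrazinInverse_of_isNilpotent_sub_sq {s : S}
    (h : IsNilpotent (s - s ^ 2)) : ∃ x, IsStronglyDrazinInverse s x := by
  obtain ⟨e, he, hse⟩ := exists_isIdempotentElem_isNilpotent_sub h
  obtain ⟨u, hu⟩ := hse.isUnit_one_add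
  have hsx : s * (e * ↑u⁻¹) = e := by
    linear_combination -(e * ↑u⁻¹) * hu + e * u.mul_inv + ↑u⁻¹ * he.eq
  refine ⟨e * ↑u⁻¹, ?_, mul_comm _ _, ?_⟩
  · rwa [hsx]
  · linear_combination -(e * ↑u⁻¹) * hsx - ↑u⁻¹ * he.eq

theorem IsStronglyDrazinInverse.isNilpotent_sub_sq {s x : S} (h : IsStronglyDrazinInverse s x) :
    IsNilpotent (s - s ^ 2) := by
  obtain ⟨hn, -, hx⟩ := h
  set π := Ideal.Quotient.mk (nilradical S)
  rw [isNilpotent_iff_mk_nilradical_eq_zero] at hn ⊢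
  replace hx := congrArg π hx
  simp only [map_sub, map_mul, map_pow] at hn hx ⊢
  linear_combination (1 - π s - π s * π x) * hn + π s * hx

theorem IsHiranoInverse.isNilpotent_sub_pow_three {a x : S} (h : IsHiranoInverse a x) :
    IsNilpotent (a - a ^ 3) := by
  obtain ⟨hn, -, hx⟩ := h
  set π := Ideal.Quotient.mk (nilradical S)
  -- modulo the nilradical `a ^ 2 = a * x` is idempotent, which kills `(a - a ^ 3) ^ 2`
  rw [← IsNilpotent.pow_iff_pos two_ne_zero]
  rw [isNilpotent_iff_mk_nilradical_eq_zero] at hn ⊢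
  replace hx := congrArg π hx
  simp only [map_sub, map_mul, map_pow] at hn hx ⊢
  linear_combination (1 - 2 * π a ^ 2 - 2 * π a * π x + π a ^ 4 + π a ^ 3 * π x
    + π a ^ 2 * π x ^ 2) * hn + (π a - π a ^ 2 * π x) * hx

theorem exists_isHiranoInverse_of_isNilpotent_sub_pow_three {a : S}
    (h : IsNilpotent (a - a ^ 3)) : ∃ x, IsHiranoInverse a x := by
  have h2 : IsNilpotent (a ^ 2 - (a ^ 2) ^ 2) := by
    rw [show a ^ 2 - (a ^ 2) ^ 2 = a * (a - a ^ 3) by ring]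
    exact (Commute.all _ _).isNilpotent_mul_left h
  obtain ⟨y, hn, -, hy⟩ := exists_isStronglyDrazinInverse_of_isNilpotent_sub_sq h2
  refine ⟨a * y, ?_, mul_comm _ _, ?_⟩
  · rwa [← mul_assoc, ← sq]
  · linear_combination a * hy

theorem isNilpotent_sub_sub_pow_three {b c : S} (hb : IsNilpotent (b - b ^ 2))
    (hc : IsNilpotent (c - c ^ 2)) : IsNilpotent ((b - c) - (b - c) ^ 3) := by
  set π := Ideal.Quotient.mk (nilradical S)
  rw [isNilpotent_iff_mk_nilradical_eq_zero] at hb hc ⊢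
  simp only [map_sub, map_pow] at hb hc ⊢
  linear_combination (1 + π b - 3 * π c) * hb + (3 * π b - 1 - π c) * hc

theorem exists_sub_eq_of_isNilpotent_sub_pow_three (h2 : IsUnit (2 : S))
    {a : S} (h : IsNilpotent (a - a ^ 3)) :
    ∃ b c, a = b - c ∧ IsNilpotent (b - b ^ 2) ∧ IsNilpotent (c - c ^ 2) := by
  obtain ⟨t, ht⟩ := h2.exists_right_inv
  set π := Ideal.Quotient.mk (nilradical S)
  have hπt : 2 * π t = 1 := by simpa [map_ofNat] using congrArg π ht
  rw [isNilpotent_iff_mk_nilradical_eq_zero, map_sub, map_pow] at h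
  refine ⟨t * (a ^ 2 + a), t * (a ^ 2 - a), by linear_combination (-a) * ht, ?_, ?_⟩ <;>
    simp only [isNilpotent_iff_mk_nilradical_eq_zero, map_sub, map_pow, map_mul, map_add]
  · linear_combination π t ^ 2 * (2 + π a) * h - (π t * π a + π t * π a ^ 2) * hπt
  · linear_combination -π t ^ 2 * (2 - π a) * h - (π t * π a ^ 2 - π t * π a) * hπt

end CommRing

section Ring

variable {R : Type u} [Ring R]

theorem exists_isStronglyDrazinInverse_iff {a : R} :
    (∃ x, IsStronglyDrazinInverse a x) ↔ IsNilpotent (a - a ^ 2) := by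
  constructor
  · rintro ⟨x, hx⟩
    obtain ⟨S, _, f, hf, a, x, rfl, rfl⟩ := Commute.exists_commRing_hom hx.2.1
    rw [isStronglyDrazinInverse_map_iff hf] at hx
    simpa using hx.isNilpotent_sub_sq.map f
  · intro h
    obtain ⟨S, _, f, hf, a, -, rfl, -⟩ := (Commute.refl a).exists_commRing_hom
    rw [← map_pow, ← map_sub, IsNilpotent.map_iff hf] at h
    obtain ⟨x, hx⟩ := exists_isStronglyDrazinInverse_of_isNilpotent_sub_sq h
    exact ⟨f x, (isStronglyDrazinInverse_map_iff hf).mpr hx⟩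

theorem exists_isHiranoInverse_iff {a : R} :
    (∃ x, IsHiranoInverse a x) ↔ IsNilpotent (a - a ^ 3) := by
  constructor
  · rintro ⟨x, hx⟩
    obtain ⟨S, _, f, hf, a, x, rfl, rfl⟩ := Commute.exists_commRing_hom hx.2.1
    rw [isHiranoInverse_map_iff hf] at hx
    simpa using hx.isNilpotent_sub_pow_three.map f
  · intro h
    obtain ⟨S, _, f, hf, a, -, rfl, -⟩ := (Commute.refl a).exists_commRing_hom
    rw [← map_pow, ← map_sub, IsNilpotent.map_iff hf] at h
    obtain ⟨x, hx⟩ := exists_isHiranoInverse_of_isNilpotent_sub_pow_three h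
    exact ⟨f x, (isHiranoInverse_map_iff hf).mpr hx⟩

theorem isNilpotent_sub_pow_three_iff (h2 : IsUnit (2 : R)) {a : R} :
    IsNilpotent (a - a ^ 3) ↔ ∃ b c : R, b * c = c * b ∧ a = b - c ∧
      IsNilpotent (b - b ^ 2) ∧ IsNilpotent (c - c ^ 2) := by
  constructor
  · intro h
    have hat : Commute a ↑h2.unit⁻¹ :=
      Commute.units_inv_right (by rw [h2.unit_spec]; exact Commute.ofNat_right a 2)
    obtain ⟨S, _, f, hf, a, t, rfl, ht⟩ := hat.exists_commRing_hom
    have h2S : IsUnit (2 : S) :=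
      IsUnit.of_mul_eq_one t (hf (by rw [map_mul, map_ofNat, ht, map_one, h2.mul_val_inv]))
    rw [← map_pow, ← map_sub, IsNilpotent.map_iff hf] at h
    obtain ⟨b, c, rfl, hb, hc⟩ := exists_sub_eq_of_isNilpotent_sub_pow_three h2S h
    refine ⟨f b, f c, by rw [← map_mul, mul_comm, map_mul], map_sub f b c, ?_, ?_⟩
    · simpa using hb.map f
    · simpa using hc.map f
  · rintro ⟨b, c, hbc, rfl, hb, hc⟩
    obtain ⟨S, _, f, hf, b, c, rfl, rfl⟩ := Commute.exists_commRing_hom hbc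
    simp only [← map_pow, ← map_sub, IsNilpotent.map_iff hf] at hb hc ⊢
    exact isNilpotent_sub_sub_pow_three hb hc

end Ring

theorem stmt9 {R : Type*} [Ring R] (h2 : IsUnit (2 : R)) (a : R) :
    (∃ x, IsHiranoInverse a x) ↔
    (∃ b c : R, b * c = c * b ∧ a = b - c ∧
      (∃ x, IsStronglyDrazinInverse b x) ∧ (∃ y, IsStronglyDrazinInverse c y)) := by
  simp only [exists_isHiranoInverse_iff, exists_isStronglyDrazinInverse_iff,
    isNilpotent_sub_pow_three_iff h2]
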